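/- Let f : R → R be Lipschitz continuous with constant λ > 0 and suppose f is ε'-approximable by continuous rational piecewise linear functions for every ε' > 0. Then for every ε with 0 < ε ≤ 1 there is a continuous piecewise linear function L with rational parameters that ε-approximates f (i.e., |f(x) − L(x)| ≤ ε|f(x)| + ε for all x) and is Lipschitz continuous with constant (1+ε)·λ. -/

import Mathlib

/-
Start from an `ε / 8`-approximation `L₁`. Far out it is affine, and an affine function that
relatively approximates a `lam`-Lipschitz function on a ray has slope at most `(1 + ε / 8) lam`;
beyond the zeros of these tails `|L₁|` increases, so the tails may be shifted by a constant at
the price of a bounded relative error. On `[-M, M]` use instead the interpolant of dyadic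
approximations of `f` on a dyadic grid of mesh `2⁻ᵏ`: when the sampling error is of order
`ε lam 2⁻ᵏ`, its slopes are at most `(1 + ε) lam`, and for a fine grid it is uniformly
`ε`-close to `f`. Finally, a function that is affine between knots, continuous at the knots and
has slopes at most `K` is `K`-Lipschitz.
-/

/-- A real number is dyadic if it is of the form `z / 2^k`. -/
def IsDyadic (x : ℝ) : Prop := ∃ (z : ℤ) (k : ℕ), x = (z : ℝ) / 2 ^ k

/-- `L` is a rational (dyadic) piecewise linear function: finitely many affine
pieces `aᵢ x + bᵢ` separated by thresholds `t₁ < … < tₙ`, all parameters dyadic. -/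
def IsRPL (L : ℝ → ℝ) : Prop :=
  ∃ (n : ℕ) (t : Fin n → ℝ) (a b : Fin (n + 1) → ℝ),
    StrictMono t ∧ (∀ i, IsDyadic (t i)) ∧
    (∀ i, IsDyadic (a i) ∧ IsDyadic (b i)) ∧
    ∀ (i : Fin (n + 1)) (x : ℝ),
      (∀ j : Fin n, (j : ℕ) < (i : ℕ) → t j ≤ x) →
      (∀ j : Fin n, (i : ℕ) ≤ (j : ℕ) → x < t j) →
      L x = a i * x + b i

open Set

namespace IsDyadic

variable {x y : ℝ}

theorem add (hx : IsDyadic x) (hy : IsDyadic y) : IsDyadic (x + y) := by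
  obtain ⟨z, k, rfl⟩ := hx
  obtain ⟨w, l, rfl⟩ := hy
  exact ⟨z * 2 ^ l + w * 2 ^ k, k + l, by push_cast; rw [pow_add]; field_simp⟩

theorem mul (hx : IsDyadic x) (hy : IsDyadic y) : IsDyadic (x * y) := by
  obtain ⟨z, k, rfl⟩ := hx
  obtain ⟨w, l, rfl⟩ := hy
  exact ⟨z * w, k + l, by push_cast; rw [pow_add]; field_simp⟩

theorem neg (hx : IsDyadic x) : IsDyadic (-x) := by
  obtain ⟨z, k, rfl⟩ := hx
  exact ⟨-z, k, by push_cast; ring⟩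

theorem sub (hx : IsDyadic x) (hy : IsDyadic y) : IsDyadic (x - y) := by
  simpa only [sub_eq_add_neg] using hx.add hy.neg

theorem two_pow (k : ℕ) : IsDyadic (2 ^ k) := ⟨2 ^ k, 0, by simp⟩

end IsDyadic

theorem exists_isDyadic_abs_sub_le (x : ℝ) {δ : ℝ} (hδ : 0 < δ) :
    ∃ d, IsDyadic d ∧ |d - x| ≤ δ := by
  obtain ⟨k, hk⟩ := exists_pow_lt_of_lt_one hδ (by norm_num : (1 / 2 : ℝ) < 1)
  refine ⟨⌊x * 2 ^ k⌋ / 2 ^ k, ⟨_, k, rfl⟩, ?_⟩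
  have hfract : ⌊x * 2 ^ k⌋ / 2 ^ k - x = -(Int.fract (x * 2 ^ k) / 2 ^ k) := by
    rw [← Int.self_sub_floor]; field_simp; ring
  rw [hfract, abs_neg, abs_of_nonneg (by have := Int.fract_nonneg (x * 2 ^ k); positivity),
    div_le_iff₀ (by positivity)]
  rw [one_div_pow, div_lt_iff₀ (by positivity)] at hk
  linarith [Int.fract_lt_one (x * 2 ^ k)]

/-- `knotPiece t n i` is the `i`-th of the intervals `(-∞, t 0), [t 0, t 1), …, [t (n-1), ∞)`
cut out by the knots `t 0, …, t (n-1)`, as in the definition of `IsRPL`. -/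
def knotPiece (t : ℕ → ℝ) (n i : ℕ) : Set ℝ :=
  {x | (∀ j < i, t j ≤ x) ∧ ∀ j, i ≤ j → j < n → x < t j}

section knotPiece

variable {t : ℕ → ℝ} {n i j : ℕ} {x y : ℝ}

theorem exists_mem_knotPiece (ht : Monotone t) (n : ℕ) (x : ℝ) :
    ∃ i ≤ n, x ∈ knotPiece t n i := by
  classical
  have hex : ∃ i, ∀ j, i ≤ j → j < n → x < t j := ⟨n, fun j h h' => absurd h' (not_lt.2 h)⟩
  refine ⟨Nat.find hex, Nat.find_min' hex fun j h h' => absurd h' (not_lt.2 h),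
    fun j hj => ?_, Nat.find_spec hex⟩
  obtain ⟨j', hjj', hj'n, hj'⟩ : ∃ j', j ≤ j' ∧ j' < n ∧ t j' ≤ x := by
    simpa using Nat.find_min hex hj
  exact (ht hjj').trans hj'

theorem mem_knotPiece_zero (ht : Monotone t) (hx : x < t 0) : x ∈ knotPiece t n 0 :=
  ⟨fun _ h => absurd h (Nat.not_lt_zero _), fun j _ _ => hx.trans_le (ht (Nat.zero_le j))⟩

theorem mem_knotPiece_succ (ht : Monotone t) (h₁ : t j ≤ x) (h₂ : x < t (j + 1)) :
    x ∈ knotPiece t n (j + 1) :=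
  ⟨fun _ h => (ht (Nat.lt_succ_iff.1 h)).trans h₁, fun _ h _ => h₂.trans_le (ht h)⟩

theorem mem_knotPiece_last (ht : Monotone t) (hx : t n ≤ x) : x ∈ knotPiece t (n + 1) (n + 1) :=
  ⟨fun _ h => (ht (Nat.lt_succ_iff.1 h)).trans hx, fun _ h h' => absurd h' (not_lt.2 h)⟩

theorem le_of_mem_knotPiece (hi : i ≤ n) (hx : x ∈ knotPiece t n i) (hy : y ∈ knotPiece t n j)
    (hxy : x ≤ y) : i ≤ j := by
  by_contra! hji
  exact ((hx.1 j hji).trans hxy).not_gt (hy.2 j le_rfl (hji.trans_le hi))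

theorem eq_of_mem_knotPiece (hi : i ≤ n) (hj : j ≤ n) (hxi : x ∈ knotPiece t n i)
    (hxj : x ∈ knotPiece t n j) : i = j :=
  (le_of_mem_knotPiece hi hxi hxj le_rfl).antisymm (le_of_mem_knotPiece hj hxj hxi le_rfl)

variable {a b : ℕ → ℝ} {K : ℝ} {L : ℝ → ℝ}

theorem abs_sub_le_of_mem_knotPiece (ht : StrictMono t)
    (hknot : ∀ j < n, a j * t j + b j = a (j + 1) * t j + b (j + 1)) (hK : ∀ i ≤ n, |a i| ≤ K)
    (hL : ∀ i ≤ n, ∀ x ∈ knotPiece t n i, L x = a i * x + b i) (d : ℕ) :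
    ∀ i x y, i + d ≤ n → x ≤ y → x ∈ knotPiece t n i → y ∈ knotPiece t n (i + d) →
      |L y - L x| ≤ K * (y - x) := by
  induction d with
  | zero =>
    intro i x y hi hxy hx hy
    rw [hL i hi x hx, hL i hi y hy,
      show a i * y + b i - (a i * x + b i) = a i * (y - x) by ring, abs_mul,
      abs_of_nonneg (sub_nonneg.2 hxy)]
    exact mul_le_mul_of_nonneg_right (hK i hi) (sub_nonneg.2 hxy)
  | succ d ih =>
    intro i x y hi hxy hx hy
    have hxt : x < t i := hx.2 i le_rfl (by omega)
    have hty : t i ≤ y := hy.1 i (by omega)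
    have hti : t i ∈ knotPiece t n (i + 1) :=
      mem_knotPiece_succ ht.monotone le_rfl (ht (Nat.lt_succ_self i))
    have hLt : L (t i) = a i * t i + b i := by
      rw [hL (i + 1) (by omega) _ hti, hknot i (by omega)]
    have hleft : |L (t i) - L x| ≤ K * (t i - x) := by
      rw [hLt, hL i (by omega) x hx,
        show a i * t i + b i - (a i * x + b i) = a i * (t i - x) by ring, abs_mul,
        abs_of_pos (sub_pos.2 hxt)]
      exact mul_le_mul_of_nonneg_right (hK i (by omega)) (sub_pos.2 hxt).le
    have hright := ih (i + 1) (t i) y (by omega) hty hti (by rwa [Nat.add_right_comm])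
    calc |L y - L x| ≤ |L y - L (t i)| + |L (t i) - L x| := abs_sub_le _ _ _
      _ ≤ K * (y - t i) + K * (t i - x) := add_le_add hright hleft
      _ = K * (y - x) := by ring

theorem exists_lipschitz_of_knots (ht : StrictMono t)
    (hknot : ∀ j < n, a j * t j + b j = a (j + 1) * t j + b (j + 1)) (hK : ∀ i ≤ n, |a i| ≤ K) :
    ∃ L : ℝ → ℝ, (∀ i ≤ n, ∀ x ∈ knotPiece t n i, L x = a i * x + b i) ∧
      ∀ x y, |L x - L y| ≤ K * |x - y| := by
  choose p hpn hp using exists_mem_knotPiece ht.monotone n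
  have hL : ∀ i ≤ n, ∀ x ∈ knotPiece t n i, a (p x) * x + b (p x) = a i * x + b i :=
    fun i hi x hx => by rw [eq_of_mem_knotPiece (hpn x) hi (hp x) hx]
  refine ⟨fun x => a (p x) * x + b (p x), hL, ?_⟩
  have hle : ∀ x y, x ≤ y → |a (p y) * y + b (p y) - (a (p x) * x + b (p x))| ≤ K * (y - x) :=
    fun x y hxy => by
      have hpxy := le_of_mem_knotPiece (hpn x) (hp x) (hp y) hxy
      refine abs_sub_le_of_mem_knotPiece ht hknot hK hL (p y - p x) (p x) x y (by
        have := hpn y; omega) hxy (hp x) ?_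
      rw [Nat.add_sub_cancel' hpxy]
      exact hp y
  intro x y
  rcases le_total x y with hxy | hyx
  · rw [abs_sub_comm, abs_sub_comm x, abs_of_nonneg (sub_nonneg.2 hxy)]
    exact hle x y hxy
  · rw [abs_of_nonneg (sub_nonneg.2 hyx)]
    exact hle y x hyx

theorem isRPL_of_mem_knotPiece (ht : StrictMono t) (htd : ∀ j, IsDyadic (t j))
    (had : ∀ i, IsDyadic (a i)) (hbd : ∀ i, IsDyadic (b i))
    (hL : ∀ i ≤ n, ∀ x ∈ knotPiece t n i, L x = a i * x + b i) : IsRPL L :=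
  ⟨n, fun j => t j, fun i => a i, fun i => b i, fun _ _ h => ht h, fun j => htd j,
    fun i => ⟨had i, hbd i⟩, fun i x h₁ h₂ => hL i (Nat.lt_succ_iff.1 i.2) x
      ⟨fun j hj => h₁ ⟨j, by omega⟩ hj, fun j hj hjn => h₂ ⟨j, hjn⟩ hj⟩⟩

end knotPiece

theorem continuous_of_abs_sub_le {L : ℝ → ℝ} {K : ℝ} (h : ∀ x y, |L x - L y| ≤ K * |x - y|) :
    Continuous L :=
  (LipschitzWith.of_dist_le' (K := K) fun x y => by
    simpa only [Real.dist_eq] using h x y).continuous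

theorem IsRPL.exists_affine_tails {L : ℝ → ℝ} (hL : IsRPL L) :
    ∃ T aL bL aR bR : ℝ, IsDyadic aL ∧ IsDyadic aR ∧ (∀ x ≤ -T, L x = aL * x + bL) ∧
      ∀ x, T ≤ x → L x = aR * x + bR := by
  obtain ⟨n, t, a, b, -, -, hd, hL⟩ := hL
  have ht : ∀ j, |t j| < ∑ i, |t i| + 1 := fun j => by
    linarith [Finset.single_le_sum (fun i _ => abs_nonneg (t i)) (Finset.mem_univ j)]
  refine ⟨∑ i, |t i| + 1, a 0, b 0, a (Fin.last n), b (Fin.last n), (hd 0).1, (hd _).1,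
    fun x hx => hL 0 x (fun j h => absurd h (Nat.not_lt_zero _)) fun j _ => ?_,
    fun x hx => hL _ x (fun j _ => ?_) fun j h => absurd j.2 (not_lt.2 h)⟩
  · linarith [neg_abs_le (t j), ht j]
  · linarith [le_abs_self (t j), ht j]

theorem le_of_forall_pos_mul_le_mul_add {c d e : ℝ} (h : ∀ s, 0 < s → c * s ≤ d * s + e) :
    c ≤ d := by
  by_contra! hdc
  have hs : 0 < (|e| + 1) / (c - d) := div_pos (by positivity) (sub_pos.2 hdc)
  nlinarith [h _ hs, le_abs_self e, mul_div_cancel₀ (|e| + 1) (sub_pos.2 hdc).ne']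

theorem abs_slope_le_of_approx {f g : ℝ → ℝ} {lam η a b T : ℝ}
    (hf : ∀ x y, |f x - f y| ≤ lam * |x - y|) (hg : ∀ x, |f x - g x| ≤ η * |f x| + η)
    (hT : ∀ x, T ≤ x → g x = a * x + b) : |a| ≤ (1 + η) * lam := by
  refine le_of_forall_pos_mul_le_mul_add (e := η * (2 * |f T| + 2)) fun s hs => ?_
  have hfs : |f (T + s) - f T| ≤ lam * s := by
    simpa [abs_of_pos hs] using hf (T + s) T
  have hgs : |a| * s = |g (T + s) - g T| := by
    rw [hT _ (by linarith), hT _ le_rfl, show a * (T + s) + b - (a * T + b) = a * s by ring,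
      abs_mul, abs_of_pos hs]
  have hη : 0 ≤ η := by nlinarith [hg T, abs_nonneg (f T - g T), abs_nonneg (f T)]
  have hfTs : |f (T + s)| ≤ |f T| + lam * s := by
    linarith [abs_sub_abs_le_abs_sub (f (T + s)) (f T)]
  calc |a| * s = |g (T + s) - g T| := hgs
    _ = |(f (T + s) - f T) + -(f (T + s) - g (T + s)) + (f T - g T)| := by congr 1; ring
    _ ≤ |f (T + s) - f T| + |f (T + s) - g (T + s)| + |f T - g T| := by
        simpa only [abs_neg] using
          abs_add_three (f (T + s) - f T) (-(f (T + s) - g (T + s))) (f T - g T)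
    _ ≤ lam * s + (η * (|f T| + lam * s) + η) + (η * |f T| + η) := by
        gcongr
        · exact (hg _).trans (by gcongr)
        · exact hg T
    _ = (1 + η) * lam * s + η * (2 * |f T| + 2) := by ring

theorem abs_slope_le_of_approx_of_le {f g : ℝ → ℝ} {lam η a b T : ℝ}
    (hf : ∀ x y, |f x - f y| ≤ lam * |x - y|) (hg : ∀ x, |f x - g x| ≤ η * |f x| + η)
    (hT : ∀ x ≤ T, g x = a * x + b) : |a| ≤ (1 + η) * lam := by
  rw [← abs_neg]
  refine abs_slope_le_of_approx (f := fun x => f (-x)) (g := fun x => g (-x)) (b := b) (T := -T)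
    (fun x y => ?_) (fun x => hg (-x)) fun x hx => by rw [hT _ (by linarith)]; ring
  rw [show x - y = -(-x - -y) by ring, abs_neg]
  exact hf (-x) (-y)

theorem monotoneOn_abs_affine (a b : ℝ) : MonotoneOn (fun x => |a * x + b|) (Ici (-b / a)) := by
  rcases eq_or_ne a 0 with rfl | ha
  · simpa using monotoneOn_const
  intro x hx y hy hxy
  have hshift : ∀ z, a * z + b = a * (z - -b / a) := fun z => by field_simp; ring
  simp only [hshift, abs_mul]
  rw [abs_of_nonneg (sub_nonneg.2 hx), abs_of_nonneg (sub_nonneg.2 hy)]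
  gcongr

/-- Replacing an `ε / 8`-approximation `g` beyond `m` by `g - g m + v`, with `v` close to
`f m`, still gives an `ε`-approximation, as long as `|g|` does not decrease beyond `m`. -/
theorem abs_sub_shift_le {ε fx fm gx gm v : ℝ} (hε : 0 ≤ ε) (hε1 : ε ≤ 1)
    (hx : |fx - gx| ≤ ε / 8 * |fx| + ε / 8) (hm : |fm - gm| ≤ ε / 8 * |fm| + ε / 8)
    (hg : |gm| ≤ |gx|) (hv : |v - fm| ≤ ε / 8) : |fx - (gx - gm + v)| ≤ ε * |fx| + ε := by
  have hfm : |fm| ≤ 2 * |fx| + 1 := by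
    nlinarith [abs_sub_abs_le_abs_sub fm gm, abs_sub_abs_le_abs_sub gx fx, abs_sub_comm gx fx,
      abs_nonneg fx, abs_nonneg fm]
  calc |fx - (gx - gm + v)| = |(fx - gx) + -(fm - gm) + -(v - fm)| := by congr 1; ring
    _ ≤ |fx - gx| + |fm - gm| + |v - fm| := by
        simpa only [abs_neg] using abs_add_three (fx - gx) (-(fm - gm)) (-(v - fm))
    _ ≤ ε * |fx| + ε := by nlinarith [abs_nonneg fx]

noncomputable def gridPoint (M k j : ℕ) : ℝ := j / 2 ^ k - M

section gridPoint

variable {M k j : ℕ}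

theorem gridPoint_strictMono (M k : ℕ) : StrictMono (gridPoint M k) := fun i j hij => by
  unfold gridPoint
  gcongr

theorem isDyadic_gridPoint : IsDyadic (gridPoint M k j) :=
  ⟨j - M * 2 ^ k, k, by unfold gridPoint; push_cast; field_simp⟩

theorem gridPoint_zero : gridPoint M k 0 = -M := by simp [gridPoint]

theorem gridPoint_top : gridPoint M k (2 * M * 2 ^ k) = M := by
  unfold gridPoint; push_cast; field_simp; ring

theorem gridPoint_succ : gridPoint M k (j + 1) = gridPoint M k j + 1 / 2 ^ k := by
  unfold gridPoint; push_cast; ring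

theorem exists_gridPoint_le_lt {x : ℝ} (h₁ : -M ≤ x) (h₂ : x < M) :
    ∃ j < 2 * M * 2 ^ k, gridPoint M k j ≤ x ∧ x < gridPoint M k (j + 1) := by
  have h2k : (0 : ℝ) < 2 ^ k := by positivity
  have hy : 0 ≤ (x + M) * 2 ^ k := mul_nonneg (by linarith) h2k.le
  have hfl := Nat.floor_le hy
  have hlt := Nat.lt_floor_add_one ((x + M) * 2 ^ k)
  refine ⟨⌊(x + M) * 2 ^ k⌋₊, ?_, ?_, ?_⟩
  · have : (⌊(x + M) * 2 ^ k⌋₊ : ℝ) < (2 * M * 2 ^ k : ℕ) := by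
      push_cast; nlinarith
    exact_mod_cast this
  · unfold gridPoint
    rw [div_sub' h2k.ne', div_le_iff₀ h2k]
    linarith
  · unfold gridPoint
    rw [lt_sub_iff_add_lt, lt_div_iff₀ h2k]
    push_cast
    linarith

end gridPoint

theorem exists_rpl_gridInterpolant {M k : ℕ} {V : ℕ → ℝ} {aL aR K : ℝ}
    (hV : ∀ j, IsDyadic (V j)) (haL : IsDyadic aL) (haR : IsDyadic aR)
    (hKL : |aL| ≤ K) (hKR : |aR| ≤ K) (hK : ∀ j, |(V (j + 1) - V j) * 2 ^ k| ≤ K) :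
    ∃ L : ℝ → ℝ, IsRPL L ∧ (∀ x y, |L x - L y| ≤ K * |x - y|) ∧
      (∀ x < -(M : ℝ), L x = V 0 + aL * (x + M)) ∧
      (∀ x, (M : ℝ) ≤ x → L x = V (2 * M * 2 ^ k) + aR * (x - M)) ∧
      ∀ j < 2 * M * 2 ^ k, ∀ x, gridPoint M k j ≤ x → x < gridPoint M k (j + 1) →
        L x = V j + (V (j + 1) - V j) * 2 ^ k * (x - gridPoint M k j) := by
  set N := 2 * M * 2 ^ k
  set P := gridPoint M k
  have hP := gridPoint_strictMono M k
  have hP0 : P 0 = -M := gridPoint_zero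
  have hPN : P N = M := gridPoint_top
  -- piece `i` passes through `(P (i - 1), V (i - 1))`; note `0 - 1 = 0` in `ℕ`
  set A : ℕ → ℝ := fun i => if i = 0 then aL else if N < i then aR else (V i - V (i - 1)) * 2 ^ k
  set B : ℕ → ℝ := fun i => V (i - 1) - A i * P (i - 1)
  have hA : ∀ i, |A i| ≤ K := fun i => by
    simp only [A]
    split_ifs
    exacts [hKL, hKR, by simpa [Nat.sub_add_cancel (Nat.pos_of_ne_zero ‹_›)] using hK (i - 1)]
  have hAd : ∀ i, IsDyadic (A i) := fun i => by
    simp only [A]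
    split_ifs
    exacts [haL, haR, ((hV _).sub (hV _)).mul (IsDyadic.two_pow k)]
  have hknot : ∀ j < N + 1, A j * P j + B j = A (j + 1) * P j + B (j + 1) := fun j hj => by
    rcases j with _ | j
    · simp [B]
    · simp only [A, B, Nat.add_sub_cancel, gridPoint_succ, P]
      rw [if_neg j.succ_ne_zero, if_neg (by omega)]
      field_simp
      ring
  obtain ⟨L, hL, hlip⟩ := exists_lipschitz_of_knots hP hknot fun i _ => hA i
  have hpiece : ∀ i ≤ N + 1, ∀ x ∈ knotPiece P (N + 1) i, L x = V (i - 1) + A i * (x - P (i - 1)) :=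
    fun i hi x hx => by rw [hL i hi x hx]; ring
  refine ⟨L, isRPL_of_mem_knotPiece hP (fun _ => isDyadic_gridPoint) hAd
    (fun i => (hV _).sub ((hAd i).mul isDyadic_gridPoint)) hL, hlip, fun x hx => ?_,
    fun x hx => ?_, fun j hj x h₁ h₂ => ?_⟩
  · rw [hpiece 0 (Nat.zero_le _) x (mem_knotPiece_zero hP.monotone (by rwa [hP0]))]
    simp [A, hP0]
  · rw [hpiece (N + 1) le_rfl x (mem_knotPiece_last hP.monotone (by rwa [hPN]))]
    simp [A, hPN]
  · rw [hpiece (j + 1) (by omega) x (mem_knotPiece_succ hP.monotone h₁ h₂)]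
    simp only [A, Nat.add_sub_cancel, if_neg j.succ_ne_zero, if_neg (show ¬N < j + 1 by omega)]

section Lipschitz

variable {f : ℝ → ℝ} {lam δ : ℝ}

theorem abs_sub_le_of_samples (hf : ∀ x y, |f x - f y| ≤ lam * |x - y|) {x y u v : ℝ}
    (hu : |u - f x| ≤ δ) (hv : |v - f y| ≤ δ) : |v - u| ≤ lam * |y - x| + 2 * δ := by
  calc |v - u| = |(v - f y) + (f y - f x) + -(u - f x)| := by congr 1; ring
    _ ≤ |v - f y| + |f y - f x| + |u - f x| := by
        simpa only [abs_neg] using abs_add_three (v - f y) (f y - f x) (-(u - f x))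
    _ ≤ lam * |y - x| + 2 * δ := by linarith [hf y x]

theorem abs_sub_affine_le (hlam : 0 ≤ lam) (hf : ∀ x y, |f x - f y| ≤ lam * |x - y|)
    {p v s K h x : ℝ} (hv : |v - f p| ≤ δ) (hs : |s| ≤ K) (hx : |x - p| ≤ h) :
    |f x - (v + s * (x - p))| ≤ lam * h + δ + K * h := by
  calc |f x - (v + s * (x - p))| = |(f x - f p) + -(v - f p) + -(s * (x - p))| := by
        congr 1; ring
    _ ≤ |f x - f p| + |v - f p| + |s| * |x - p| := by
        simpa only [abs_neg, abs_mul] using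
          abs_add_three (f x - f p) (-(v - f p)) (-(s * (x - p)))
    _ ≤ lam * h + δ + K * h := by
        gcongr
        · exact (hf x p).trans (by gcongr)
        · exact (abs_nonneg s).trans hs

end Lipschitz

theorem exists_dyadic_samples {f : ℝ → ℝ} {lam ε : ℝ} (M : ℕ) (hlam : 0 < lam)
    (hf : ∀ x y, |f x - f y| ≤ lam * |x - y|) (hε : 0 < ε) (hε1 : ε ≤ 1) :
    ∃ (k : ℕ) (V : ℕ → ℝ), lam * (1 / 2 ^ k) ≤ ε / 8 ∧ (∀ j, IsDyadic (V j)) ∧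
      (∀ j, |V j - f (gridPoint M k j)| ≤ ε / 8) ∧
      ∀ j, |(V (j + 1) - V j) * 2 ^ k| ≤ (1 + ε) * lam := by
  obtain ⟨k, hk⟩ := exists_pow_lt_of_lt_one (show 0 < ε / (8 * lam) by positivity)
    (by norm_num : (1 / 2 : ℝ) < 1)
  have h2k : (0 : ℝ) < 2 ^ k := by positivity
  have hstep : lam * (1 / 2 ^ k) ≤ ε / 8 := by
    rw [one_div_pow, lt_div_iff₀ (by positivity)] at hk
    linarith
  -- a sampling error of order `ε lam 2⁻ᵏ` keeps the interpolation slopes below `(1 + ε) lam`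
  set δ := ε * lam / (2 * 2 ^ k)
  have hδ : δ ≤ ε / 8 := by
    have : δ = ε / 2 * (lam * (1 / 2 ^ k)) := by simp only [δ]; field_simp
    rw [this]
    nlinarith
  choose V hVd hV using fun j =>
    exists_isDyadic_abs_sub_le (f (gridPoint M k j)) (show 0 < δ by positivity)
  refine ⟨k, V, hstep, hVd, fun j => (hV j).trans hδ, fun j => ?_⟩
  have := abs_sub_le_of_samples hf (hV j) (hV (j + 1))
  rw [gridPoint_succ, add_sub_cancel_left,
    abs_of_pos (show (0 : ℝ) < 1 / 2 ^ k by positivity)] at this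
  rw [abs_mul, abs_of_pos h2k]
  calc |V (j + 1) - V j| * 2 ^ k ≤ (lam * (1 / 2 ^ k) + 2 * δ) * 2 ^ k := by gcongr
    _ = (1 + ε) * lam := by simp only [δ]; field_simp

theorem exists_lipschitz_rpl_of_affine_tails {f L₁ : ℝ → ℝ} {lam ε aL bL aR bR : ℝ} {M : ℕ}
    (hlam : 0 < lam) (hf : ∀ x y, |f x - f y| ≤ lam * |x - y|) (hε : 0 < ε) (hε1 : ε ≤ 1)
    (hL₁ : ∀ x, |f x - L₁ x| ≤ ε / 8 * |f x| + ε / 8) (haL : IsDyadic aL) (haR : IsDyadic aR)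
    (hleft : ∀ x ≤ -(M : ℝ), L₁ x = aL * x + bL)
    (hright : ∀ x, (M : ℝ) ≤ x → L₁ x = aR * x + bR)
    (hmonoL : ∀ x ≤ -(M : ℝ), |L₁ (-M)| ≤ |L₁ x|)
    (hmonoR : ∀ x, (M : ℝ) ≤ x → |L₁ M| ≤ |L₁ x|) :
    ∃ L : ℝ → ℝ, IsRPL L ∧ Continuous L ∧ (∀ x, |f x - L x| ≤ ε * |f x| + ε) ∧
      ∀ x y, |L x - L y| ≤ (1 + ε) * lam * |x - y| := by
  have hslopeL : |aL| ≤ (1 + ε) * lam :=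
    (abs_slope_le_of_approx_of_le hf hL₁ hleft).trans (by nlinarith)
  have hslopeR : |aR| ≤ (1 + ε) * lam :=
    (abs_slope_le_of_approx hf hL₁ hright).trans (by nlinarith)
  obtain ⟨k, V, hstep, hVd, hV, hVslope⟩ := exists_dyadic_samples M hlam hf hε hε1
  obtain ⟨L, hLd, hLlip, hLleft, hLright, hLmid⟩ :=
    exists_rpl_gridInterpolant hVd haL haR hslopeL hslopeR hVslope
  refine ⟨L, hLd, continuous_of_abs_sub_le hLlip, fun x => ?_, hLlip⟩
  rcases lt_or_ge x (-M) with hx | hx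
  · have hLx : L x = L₁ x - L₁ (-M) + V 0 := by
      rw [hLleft x hx, hleft x hx.le, hleft _ le_rfl]; ring
    rw [hLx]
    exact abs_sub_shift_le hε.le hε1 (hL₁ x) (hL₁ _) (hmonoL x hx.le)
      (gridPoint_zero (M := M) (k := k) ▸ hV 0)
  rcases le_or_gt (M : ℝ) x with hx' | hx'
  · have hLx : L x = L₁ x - L₁ M + V (2 * M * 2 ^ k) := by
      rw [hLright x hx', hright x hx', hright _ le_rfl]; ring
    rw [hLx]
    exact abs_sub_shift_le hε.le hε1 (hL₁ x) (hL₁ _) (hmonoR x hx')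
      (gridPoint_top (M := M) (k := k) ▸ hV _)
  obtain ⟨j, hj, h₁, h₂⟩ := exists_gridPoint_le_lt (k := k) hx hx'
  have hxj : |x - gridPoint M k j| ≤ 1 / 2 ^ k := by
    rw [abs_of_nonneg (sub_nonneg.2 h₁)]
    linarith [gridPoint_succ (M := M) (k := k) (j := j)]
  have := abs_sub_affine_le hlam.le hf (hV j) (hVslope j) hxj
  rw [hLmid j hj x h₁ h₂]
  nlinarith [abs_nonneg (f x)]

theorem lipschitz_rpl_approximation (f : ℝ → ℝ) (lam : ℝ) (hlam : 0 < lam)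
    (hf : ∀ x y, |f x - f y| ≤ lam * |x - y|)
    (happ : ∀ ε' : ℝ, 0 < ε' → ∃ L : ℝ → ℝ, IsRPL L ∧ Continuous L ∧
      ∀ x, |f x - L x| ≤ ε' * |f x| + ε') :
    ∀ ε : ℝ, 0 < ε → ε ≤ 1 → ∃ L : ℝ → ℝ, IsRPL L ∧ Continuous L ∧
      (∀ x, |f x - L x| ≤ ε * |f x| + ε) ∧
      (∀ x y, |L x - L y| ≤ (1 + ε) * lam * |x - y|) := by
  intro ε hε hε1
  obtain ⟨L₁, hL₁, -, hfL₁⟩ := happ (ε / 8) (by positivity)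
  obtain ⟨T, aL, bL, aR, bR, haL, haR, hleft, hright⟩ := hL₁.exists_affine_tails
  obtain ⟨M, hM⟩ := exists_nat_ge (max T (max (bL / aL) (-bR / aR)))
  obtain ⟨hTM, hLM, hRM⟩ : T ≤ M ∧ bL / aL ≤ M ∧ -bR / aR ≤ M := by
    simpa only [max_le_iff] using hM
  refine exists_lipschitz_rpl_of_affine_tails hlam hf hε hε1 hfL₁ haL haR
    (fun x hx => hleft x (by linarith)) (fun x hx => hright x (by linarith))
    (fun x hx => ?_) (fun x hx => ?_)
  · have h := monotoneOn_abs_affine (-aL) bL (by rwa [mem_Ici, neg_div_neg_eq])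
      (by rw [mem_Ici, neg_div_neg_eq]; linarith) (by linarith : (M : ℝ) ≤ -x)
    rw [hleft _ (by linarith), hleft x (by linarith)]
    simpa only [neg_mul, mul_neg, neg_neg] using h
  · rw [hright _ (by linarith), hright x (by linarith)]
    exact monotoneOn_abs_affine aR bR hRM (hRM.trans hx) hx
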